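/- arXiv:1802.07712 — 2 statements merged into one kernel-verified Lean document; each statement's English description precedes it below -/
import Mathlib

section
/- Let A be an m×n matrix and B an m×q matrix with entries in T = ℝ ∪ {−∞} such that every column of A has at least one finite entry, every row of A has at least one finite entry, and every row of B has at least one finite entry, and let P be a q×n row-stochastic matrix; let F : ℝⁿ → ℝⁿ be the associated Shapley operator and F* : ℝᵐ → ℝᵐ the dual Shapley operator. Then it is not possible that both of the following hold: there exists x ∈ ℝⁿ with x_i < F(x)_i for all i, and there exists y ∈ ℝᵐ with y_i < F*(y)_i for all i. (At most one of the strict feasibility problems 𝒫_ℝ(F) and 𝒫_ℝ(F*) is feasible.) -/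
noncomputable section

variable {m n q : ℕ}

/-- The real value of a finite element of `T = ℝ ∪ {-∞}` (junk value `0` at `-∞`). -/
def sval (a : WithBot ℝ) : ℝ := a.unbotD 0

/-- The Shapley operator `F : ℝⁿ → ℝⁿ` associated with `A, B, P`. -/
def shapley (A : Fin m → Fin n → WithBot ℝ) (B : Fin m → Fin q → WithBot ℝ)
    (P : Fin q → Fin n → ℝ) (x : Fin n → ℝ) : Fin n → ℝ := fun j =>
  sInf {r : ℝ | ∃ i, A i j ≠ ⊥ ∧
    r = - sval (A i j) +
      sSup {s : ℝ | ∃ k, B i k ≠ ⊥ ∧ s = sval (B i k) + ∑ l, P k l * x l}}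

/-- The dual Shapley operator `F* : ℝᵐ → ℝᵐ`:
`F*(y)_i = min_{k : B_{ik} ≠ -∞} ( -B_{ik} + Σ_l P_{kl} · max_{i' : A_{i'l} ≠ -∞} (A_{i'l} + y_{i'}) )`. -/
def dualShapley (A : Fin m → Fin n → WithBot ℝ) (B : Fin m → Fin q → WithBot ℝ)
    (P : Fin q → Fin n → ℝ) (y : Fin m → ℝ) : Fin m → ℝ := fun i =>
  sInf {r : ℝ | ∃ k, B i k ≠ ⊥ ∧
    r = - sval (B i k) +
      ∑ l, P k l * sSup {s : ℝ | ∃ i', A i' l ≠ ⊥ ∧ s = sval (A i' l) + y i'}}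

/-! Let `M = y ⊙ A` be the max-plus product appearing inside `F*`, choose `j`
maximising `x_j + M_j`, an `i` attaining `M_j = A_{ij} + y_i`, and a `k` attaining the inner
maximum of `F(x)_j` along row `i`. Then the two strict inequalities add up to
`A_{ij} + x_j + y_i < P_k (x + M)`, while `P_k (x + M) ≤ x_j + M_j = A_{ij} + x_j + y_i`
because `P_k` is a probability vector. -/

lemma finite_setOf_exists_and_eq {α β : Type*} [Finite α] (p : α → Prop) (f : α → β) :
    {r : β | ∃ i, p i ∧ r = f i}.Finite := by
  convert (Set.toFinite {i | p i}).image f using 1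
  ext r
  simp [eq_comm]

section FiniteExtrema

variable {α β : Type*} [Finite α] [ConditionallyCompleteLinearOrder β] (p : α → Prop) (f : α → β)

lemma exists_csSup_setOf_exists_and_eq (h : ∃ i, p i) :
    ∃ i, p i ∧ sSup {r : β | ∃ i, p i ∧ r = f i} = f i :=
  let ⟨i, hi⟩ := h
  Set.Nonempty.csSup_mem (s := {r : β | ∃ i, p i ∧ r = f i}) ⟨f i, i, hi, rfl⟩
    (finite_setOf_exists_and_eq p f)

lemma csInf_setOf_exists_and_eq_le {i : α} (hi : p i) :
    sInf {r : β | ∃ i, p i ∧ r = f i} ≤ f i :=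
  csInf_le (finite_setOf_exists_and_eq p f).bddBelow ⟨i, hi, rfl⟩

end FiniteExtrema

lemma sum_mul_le_of_forall_le {ι : Type*} (s : Finset ι) {w z : ι → ℝ} {c : ℝ}
    (hw : ∀ l ∈ s, 0 ≤ w l) (hw1 : ∑ l ∈ s, w l = 1) (hz : ∀ l ∈ s, z l ≤ c) :
    ∑ l ∈ s, w l * z l ≤ c :=
  calc ∑ l ∈ s, w l * z l ≤ ∑ l ∈ s, w l * c :=
        Finset.sum_le_sum fun l hl => mul_le_mul_of_nonneg_left (hz l hl) (hw l hl)
    _ = c := by rw [← Finset.sum_mul, hw1, one_mul]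

/-- Max-plus analogue of `Matrix.vecMul`: `(y ⊙ A)_l = max_{i : A_{il} ≠ -∞} (y_i + A_{il})`. -/
def maxPlusVecMul (A : Fin m → Fin n → WithBot ℝ) (y : Fin m → ℝ) (l : Fin n) : ℝ :=
  sSup {s : ℝ | ∃ i, A i l ≠ ⊥ ∧ s = sval (A i l) + y i}

lemma exists_maxPlusVecMul_eq (A : Fin m → Fin n → WithBot ℝ) (y : Fin m → ℝ) {l : Fin n}
    (hl : ∃ i, A i l ≠ ⊥) : ∃ i, A i l ≠ ⊥ ∧ maxPlusVecMul A y l = sval (A i l) + y i :=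
  exists_csSup_setOf_exists_and_eq _ _ hl

lemma exists_add_lt_of_lt_shapley {A : Fin m → Fin n → WithBot ℝ} {B : Fin m → Fin q → WithBot ℝ}
    {P : Fin q → Fin n → ℝ} {x : Fin n → ℝ} {i : Fin m} {j : Fin n}
    (hx : x j < shapley A B P x j) (hij : A i j ≠ ⊥) (hi : ∃ k, B i k ≠ ⊥) :
    ∃ k, B i k ≠ ⊥ ∧ sval (A i j) + x j < sval (B i k) + ∑ l, P k l * x l := by
  obtain ⟨k, hik, hmax⟩ := exists_csSup_setOf_exists_and_eq
    (fun k => B i k ≠ ⊥) (fun k => sval (B i k) + ∑ l, P k l * x l) hi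
  have hmin := csInf_setOf_exists_and_eq_le (fun i => A i j ≠ ⊥)
    (fun i => - sval (A i j) +
      sSup {s : ℝ | ∃ k, B i k ≠ ⊥ ∧ s = sval (B i k) + ∑ l, P k l * x l}) hij
  refine ⟨k, hik, ?_⟩
  have := hx.trans_le hmin
  simp only [hmax] at this
  linarith

lemma add_lt_of_lt_dualShapley {A : Fin m → Fin n → WithBot ℝ} {B : Fin m → Fin q → WithBot ℝ}
    {P : Fin q → Fin n → ℝ} {y : Fin m → ℝ} {i : Fin m} {k : Fin q}
    (hy : y i < dualShapley A B P y i) (hik : B i k ≠ ⊥) :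
    sval (B i k) + y i < ∑ l, P k l * maxPlusVecMul A y l := by
  have hmin := csInf_setOf_exists_and_eq_le (fun k => B i k ≠ ⊥)
    (fun k => - sval (B i k) + ∑ l, P k l * maxPlusVecMul A y l) hik
  have := hy.trans_le hmin
  linarith

theorem stmt5_general (hn : 0 < n)
    (A : Fin m → Fin n → WithBot ℝ) (B : Fin m → Fin q → WithBot ℝ)
    (P : Fin q → Fin n → ℝ)
    (hAcol : ∀ j, ∃ i, A i j ≠ ⊥)
    (hBrow : ∀ i, ∃ k, B i k ≠ ⊥)
    (hPnn : ∀ k l, 0 ≤ P k l)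
    (hPsum : ∀ k, ∑ l, P k l = 1) :
    ¬ ((∃ x : Fin n → ℝ, ∀ j, x j < shapley A B P x j) ∧
       (∃ y : Fin m → ℝ, ∀ i, y i < dualShapley A B P y i)) := by
  rintro ⟨⟨x, hx⟩, y, hy⟩
  set M := maxPlusVecMul A y
  have : Nonempty (Fin n) := ⟨⟨0, hn⟩⟩
  obtain ⟨j, hj⟩ := Finite.exists_max fun l => x l + M l
  obtain ⟨i, hij, hMj⟩ := exists_maxPlusVecMul_eq A y (hAcol j)
  obtain ⟨k, hik, hprimal⟩ := exists_add_lt_of_lt_shapley (hx j) hij (hBrow i)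
  have hdual := add_lt_of_lt_dualShapley (hy i) hik
  have havg : ∑ l, P k l * (x l + M l) ≤ x j + M j :=
    sum_mul_le_of_forall_le _ (fun l _ => hPnn k l) (hPsum k) fun l _ => hj l
  simp only [mul_add, Finset.sum_add_distrib] at havg
  linarith

/-- At most one of the strict feasibility problems `𝒫_ℝ(F)` and `𝒫_ℝ(F*)` is feasible. -/
theorem stmt5 (hm : 0 < m) (hn : 0 < n) (hq : 0 < q)
    (A : Fin m → Fin n → WithBot ℝ) (B : Fin m → Fin q → WithBot ℝ)
    (P : Fin q → Fin n → ℝ)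
    (hAcol : ∀ j, ∃ i, A i j ≠ ⊥)
    (hArow : ∀ i, ∃ j, A i j ≠ ⊥)
    (hBrow : ∀ i, ∃ k, B i k ≠ ⊥)
    (hPnn : ∀ k l, 0 ≤ P k l)
    (hPsum : ∀ k, ∑ l, P k l = 1) :
    ¬ ((∃ x : Fin n → ℝ, ∀ j, x j < shapley A B P x j) ∧
       (∃ y : Fin m → ℝ, ∀ i, y i < dualShapley A B P y i)) :=
  stmt5_general hn A B P hAcol hBrow hPnn hPsum
end
end

section
/- Let F be an order-preserving, additively homogeneous, and diagonal free self-map of Tⁿ. Then S(F) := { x ∈ Tⁿ : x ≤ F(x) } contains a Hilbert ball B_H(z, r) with z ∈ ℝⁿ and r > 0 if and only if c̲w̲(F) > 0. Moreover, when S(F) contains a Hilbert ball of positive radius, the supremum of the radii r ≥ 0 such that B_H(z, r) ⊆ S(F) for some z ∈ ℝⁿ equals c̲w̲(F) (an equality in [0, +∞]). -/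
noncomputable section

variable {n : ℕ}

/-- The canonical embedding of `ℝⁿ` into `Tⁿ`. -/
def toT (x : Fin n → ℝ) : Fin n → WithBot ℝ := fun i => (x i : WithBot ℝ)

/-- `F` is order-preserving. -/
def OrdPres (F : (Fin n → WithBot ℝ) → (Fin n → WithBot ℝ)) : Prop :=
  ∀ x y, x ≤ y → F x ≤ F y

/-- `F` is additively homogeneous. -/
def AddHomog (F : (Fin n → WithBot ℝ) → (Fin n → WithBot ℝ)) : Prop :=
  ∀ (c : ℝ) (x : Fin n → WithBot ℝ),
    F (fun i => (c : WithBot ℝ) + x i) = fun i => (c : WithBot ℝ) + F x i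

/-- `F` is diagonal free: `F(x)_i` does not depend on `x_i` (on real vectors). -/
def DiagFree (F : (Fin n → WithBot ℝ) → (Fin n → WithBot ℝ)) : Prop :=
  ∀ (i : Fin n) (x y : Fin n → ℝ), (∀ j, j ≠ i → x j = y j) →
    F (toT x) i = F (toT y) i

/-- Hilbert's seminorm `‖x‖_H = max_i x_i - min_i x_i` on `ℝⁿ`. -/
def hnorm (x : Fin n → ℝ) : ℝ := (⨆ i, x i) - (⨅ i, x i)

/-- The lower Collatz–Wielandt number of `F`, as an extended real. -/
def lcw (F : (Fin n → WithBot ℝ) → (Fin n → WithBot ℝ)) : EReal :=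
  sSup ((fun μ : ℝ => (μ : EReal)) ''
    {μ : ℝ | ∃ z : Fin n → ℝ, ∀ i, ((μ + z i : ℝ) : WithBot ℝ) ≤ F (toT z) i})

/-!
Diagonal freeness is what makes the radii of Hilbert balls in `S(F)` coincide with the
Collatz–Wielandt witnesses `μ ≥ 0`. If `B_H(z, r) ⊆ S(F)`, raising coordinate `i` of `z` by `r`
stays in the ball and leaves `F(·)_i` unchanged, so `F(z)_i ≥ r + z_i`. Conversely, if
`F(z) ≥ μ + z` and `‖x - z‖_H ≤ μ`, put `λ := x_i - z_i - μ`; then `λ + z ≤ x`, so monotonicity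
and homogeneity give `F(x)_i ≥ λ + F(z)_i ≥ λ + μ + z_i = x_i`.
-/

def cwSet (F : (Fin n → WithBot ℝ) → (Fin n → WithBot ℝ)) : Set ℝ :=
  {μ : ℝ | ∃ z : Fin n → ℝ, ∀ i, ((μ + z i : ℝ) : WithBot ℝ) ≤ F (toT z) i}

def BallSubsetS (F : (Fin n → WithBot ℝ) → (Fin n → WithBot ℝ)) (z : Fin n → ℝ) (r : ℝ) :
    Prop :=
  ∀ x : Fin n → ℝ, hnorm (x - z) ≤ r → toT x ≤ F (toT x)

lemma sub_le_hnorm (x : Fin n → ℝ) (i j : Fin n) : x i - x j ≤ hnorm x :=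
  sub_le_sub (le_ciSup (Set.finite_range x).bddAbove i) (ciInf_le (Set.finite_range x).bddBelow j)

lemma hnorm_le_of_mem_Icc [Nonempty (Fin n)] {x : Fin n → ℝ} {a b : ℝ}
    (hx : ∀ i, x i ∈ Set.Icc a b) : hnorm x ≤ b - a :=
  sub_le_sub (ciSup_le fun i => (hx i).2) (le_ciInf fun i => (hx i).1)

lemma hnorm_single_le (i : Fin n) {r : ℝ} (hr : 0 ≤ r) : hnorm (Pi.single i r) ≤ r := by
  have : Nonempty (Fin n) := ⟨i⟩
  simpa using hnorm_le_of_mem_Icc (x := Pi.single i r) (a := 0) (b := r) fun j => by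
    rcases eq_or_ne j i with rfl | hj <;> simp [*]

lemma add_apply_le_apply {F : (Fin n → WithBot ℝ) → (Fin n → WithBot ℝ)}
    (hmono : OrdPres F) (hhom : AddHomog F) {c : ℝ} {y z : Fin n → ℝ}
    (h : ∀ j, c + z j ≤ y j) (i : Fin n) : (c : WithBot ℝ) + F (toT z) i ≤ F (toT y) i := by
  have hle : (fun j => (c : WithBot ℝ) + toT z j) ≤ toT y := fun j => by
    simpa only [toT, ← WithBot.coe_add, WithBot.coe_le_coe] using h j
  have h := hmono _ _ hle i
  rwa [hhom] at h

lemma mem_cwSet_of_ballSubsetS {F : (Fin n → WithBot ℝ) → (Fin n → WithBot ℝ)}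
    (hdf : DiagFree F) {z : Fin n → ℝ} {r : ℝ} (hr : 0 ≤ r) (hball : BallSubsetS F z r) :
    r ∈ cwSet F := by
  refine ⟨z, fun i => ?_⟩
  have hx := hball (z + Pi.single i r) (by simpa using hnorm_single_le i hr) i
  rwa [hdf i _ z fun j hj => by simp [hj], toT, Pi.add_apply, Pi.single_eq_same, add_comm] at hx

lemma ballSubsetS_of_add_le_apply {F : (Fin n → WithBot ℝ) → (Fin n → WithBot ℝ)}
    (hmono : OrdPres F) (hhom : AddHomog F) {z : Fin n → ℝ} {μ : ℝ}
    (hz : ∀ i, ((μ + z i : ℝ) : WithBot ℝ) ≤ F (toT z) i) : BallSubsetS F z μ := by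
  intro x hx i
  have hshift : ∀ j, (x i - z i - μ) + z j ≤ x j := fun j => by
    have := sub_le_hnorm (x - z) i j
    simp only [Pi.sub_apply] at this
    linarith
  calc toT x i = ((x i - z i - μ : ℝ) : WithBot ℝ) + ((μ + z i : ℝ) : WithBot ℝ) := by
        rw [toT, ← WithBot.coe_add]; ring_nf
    _ ≤ ((x i - z i - μ : ℝ) : WithBot ℝ) + F (toT z) i := by gcongr; exact hz i
    _ ≤ F (toT x) i := add_apply_le_apply hmono hhom hshift i

lemma radii_eq_cwSet_inter_Ici {F : (Fin n → WithBot ℝ) → (Fin n → WithBot ℝ)}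
    (hmono : OrdPres F) (hhom : AddHomog F) (hdf : DiagFree F) :
    {r : ℝ | 0 ≤ r ∧ ∃ z, BallSubsetS F z r} = {r ∈ cwSet F | 0 ≤ r} := by
  ext r
  constructor
  · rintro ⟨hr, z, hball⟩
    exact ⟨mem_cwSet_of_ballSubsetS hdf hr hball, hr⟩
  · rintro ⟨⟨z, hz⟩, hr⟩
    exact ⟨hr, z, ballSubsetS_of_add_le_apply hmono hhom hz⟩

lemma sSup_image_sep_le_eq {α β : Type*} [LinearOrder α] [CompleteLattice β] {f : α → β}
    (hf : Monotone f) {S : Set α} {a b : α} (ha : a ∈ S) (hba : b ≤ a) :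
    sSup (f '' {x ∈ S | b ≤ x}) = sSup (f '' S) := by
  refine le_antisymm (sSup_le_sSup (Set.image_mono fun _ hx => hx.1)) (sSup_le ?_)
  rintro _ ⟨x, hx, rfl⟩
  rcases le_total b x with hbx | hxb
  · exact le_sSup ⟨x, ⟨hx, hbx⟩, rfl⟩
  · exact (hf (hxb.trans hba)).trans (le_sSup ⟨a, ⟨ha, hba⟩, rfl⟩)

lemma pos_sSup_coe_iff {S : Set ℝ} :
    0 < sSup ((fun μ : ℝ => (μ : EReal)) '' S) ↔ ∃ μ ∈ S, 0 < μ := by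
  simp only [lt_sSup_iff, Set.exists_mem_image, EReal.coe_pos]

/-- `S(F)` contains a Hilbert ball of positive radius iff `c̲w̲(F) > 0`, in which case the
supremum of the radii of Hilbert balls contained in `S(F)` equals `c̲w̲(F)`
(an equality in `[0, +∞]`). -/
theorem stmt8 (F : (Fin n → WithBot ℝ) → (Fin n → WithBot ℝ))
    (hmono : OrdPres F) (hhom : AddHomog F) (hdf : DiagFree F) :
    ((∃ (z : Fin n → ℝ) (r : ℝ), 0 < r ∧
        ∀ x : Fin n → ℝ, hnorm (x - z) ≤ r → toT x ≤ F (toT x)) ↔ 0 < lcw F) ∧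
    ((∃ (z : Fin n → ℝ) (r : ℝ), 0 < r ∧
        ∀ x : Fin n → ℝ, hnorm (x - z) ≤ r → toT x ≤ F (toT x)) →
      sSup ((fun r : ℝ => (r : EReal)) ''
          {r : ℝ | 0 ≤ r ∧ ∃ z : Fin n → ℝ,
            ∀ x : Fin n → ℝ, hnorm (x - z) ≤ r → toT x ≤ F (toT x)}) = lcw F) := by
  have hradii := radii_eq_cwSet_inter_Ici hmono hhom hdf
  change ((∃ z r, 0 < r ∧ BallSubsetS F z r) ↔ 0 < sSup (_ '' cwSet F)) ∧
    ((∃ z r, 0 < r ∧ BallSubsetS F z r) → sSup (_ '' {r | 0 ≤ r ∧ ∃ z, BallSubsetS F z r}) =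
      sSup (_ '' cwSet F))
  rw [hradii, pos_sSup_coe_iff]
  refine ⟨⟨fun ⟨z, r, hr, hball⟩ => ⟨r, mem_cwSet_of_ballSubsetS hdf hr.le hball, hr⟩,
    fun ⟨μ, ⟨z, hz⟩, hμ⟩ => ⟨z, μ, hμ, ballSubsetS_of_add_le_apply hmono hhom hz⟩⟩, ?_⟩
  rintro ⟨z, r, hr, hball⟩
  exact sSup_image_sep_le_eq EReal.coe_strictMono.monotone
    (mem_cwSet_of_ballSubsetS hdf hr.le hball) hr.le
end
end
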